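/- arXiv:1106.3269 — 2 statements merged into one kernel-verified Lean document; each statement's English description precedes it below -/
import Mathlib

section
/- Stability of the forward step: assume in addition that f is uniformly Lipschitz in its second variable with constant K. Then for every ν > 0 there exists C > 0 (depending only on ν, T, σ, K, ‖u_T‖_∞, ‖f‖_∞, ‖m_0‖_∞) such that for all integers I, J ≥ 1 with 1/Δt > 1 + (K/σ²)·max(‖exp(u_T/σ²)‖²_∞, ‖m_0‖²_∞/ε²) + ν, the following holds for every n ∈ ℕ: for every φ̃ ∈ M_ε and every ψ̃ ∈ M_0 with ψ̃_{0,j} = m_0(x_j)/φ̃_{0,j} for all j, defining the residual η̃_{i+1,j} := (ψ̃_{i+1,j} − ψ̃_{i,j})/Δt − (σ²/2)(ψ̃_{i+1,j+1} − 2ψ̃_{i+1,j} + ψ̃_{i+1,j-1})/(Δx)² − (1/σ²) f(x_j, φ̃_{i+1,j} ψ̃_{i+1,j}) ψ̃_{i+1,j} for 0 ≤ i ≤ I−1, 0 ≤ j ≤ J (and η̃_{0,j} := 0), one has ‖ψ̂^{n+1} − ψ̃‖² ≤ C‖φ̂^{n+1/2} − φ̃‖² + C‖η̃‖², where φ̂^{n+1/2},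 ψ̂^{n+1} are the scheme iterates. -/
noncomputable section

open Real Filter

/-- Sup of `|g|` over `[0,1]` (the sup norm `‖g‖_∞`). -/
def supIcc (g : ℝ → ℝ) : ℝ := ⨆ x : Set.Icc (0:ℝ) 1, |g (x : ℝ)|

/-- Sup of `|f|` over `[0,1] × ℝ` (the sup norm `‖f‖_∞`). -/
def supF (f : ℝ → ℝ → ℝ) : ℝ := ⨆ p : Set.Icc (0:ℝ) 1 × ℝ, |f (p.1 : ℝ) p.2|

/-- Membership in `M_ε`: all grid entries (for `i ≤ I`, `j ≤ J`) are at least `ε`. -/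
def MemM (I J : ℕ) (ε : ℝ) (m : ℕ → ℕ → ℝ) : Prop :=
  ∀ i ≤ I, ∀ j ≤ J, ε ≤ m i j

/-- The discrete backward scheme `(Ê_φ)` with data `ψ`.  Here `Δt = T/I`, `Δx = 1/J`,
`x_j = j/J`, and the Neumann conventions `m_{i,-1} = m_{i,0}`, `m_{i,J+1} = m_{i,J}`
are realized by the clamped indices `j - 1` (truncated `ℕ`-subtraction) and `min (j+1) J`. -/
def BScheme (T σ : ℝ) (I J : ℕ) (f : ℝ → ℝ → ℝ) (uT : ℝ → ℝ)
    (ψ φ : ℕ → ℕ → ℝ) : Prop :=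
  (∀ i < I, ∀ j ≤ J,
      (φ (i+1) j - φ i j) / (T / (I:ℝ))
        + σ^2 / 2 * ((φ i (min (j+1) J) - 2 * φ i j + φ i (j-1)) / (1/(J:ℝ))^2)
      = -(1/σ^2) * f ((j:ℝ)/(J:ℝ)) (φ i j * ψ i j) * φ i j)
  ∧ ∀ j ≤ J, φ I j = Real.exp (uT ((j:ℝ)/(J:ℝ)) / σ^2)

/-- The discrete forward scheme `(Ê_ψ)` with data `φ` (same conventions as `BScheme`). -/
def FScheme (T σ : ℝ) (I J : ℕ) (f : ℝ → ℝ → ℝ) (m0 : ℝ → ℝ)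
    (φ ψ : ℕ → ℕ → ℝ) : Prop :=
  (∀ i < I, ∀ j ≤ J,
      (ψ (i+1) j - ψ i j) / (T / (I:ℝ))
        - σ^2 / 2 * ((ψ (i+1) (min (j+1) J) - 2 * ψ (i+1) j + ψ (i+1) (j-1)) / (1/(J:ℝ))^2)
      = (1/σ^2) * f ((j:ℝ)/(J:ℝ)) (φ (i+1) j * ψ (i+1) j) * ψ (i+1) j)
  ∧ ∀ j ≤ J, ψ 0 j = m0 ((j:ℝ)/(J:ℝ)) / φ 0 j

/-- Squared grid norm `‖m‖² = max_{0 ≤ i ≤ I} (1/(J+1)) Σ_{j=0}^{J} m_{i,j}²`. -/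
def gnormSq (I J : ℕ) (m : ℕ → ℕ → ℝ) : ℝ :=
  (Finset.range (I+1)).sup' (Finset.nonempty_range_iff.mpr (Nat.succ_ne_zero I))
    (fun i => (1/((J:ℝ)+1)) * ∑ j ∈ Finset.range (J+1), (m i j)^2)

/-- Grid norm `‖m‖`. -/
def gnorm (I J : ℕ) (m : ℕ → ℕ → ℝ) : ℝ := Real.sqrt (gnormSq I J m)

/-! The error `e = ψ̂ - ψ̃` solves one implicit heat step per time level, with source
`(1/σ²) (f(φ̂ψ̂) ψ̂ - f(φ̃ψ̃) ψ̃) - η̃`. Testing that step against `e` and summing by parts (the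
discrete Neumann Laplacian is nonpositive) bounds the growth of `Σ_j e_j²` by the source.
The discrete maximum principle gives `φ̂ ≥ ε` and `0 ≤ ψ̂ ≤ ‖m₀‖_∞ / ε`, and with these bounds
monotonicity and the Lipschitz continuity of `f` control the nonlinear part of the source by
`e² + (φ̂ - φ̃)²`. Under the time-step condition the resulting recursion is of Grönwall type,
and the initial error is controlled by `φ̂ - φ̃` because `ψ_0 = m_0 / φ_0` for both. -/

open Finset

def neumannLap (J : ℕ) (u : ℕ → ℝ) (j : ℕ) : ℝ := u (min (j + 1) J) - 2 * u j + u (j - 1)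

def rowNormSq (J : ℕ) (u : ℕ → ℝ) : ℝ := 1 / ((J : ℝ) + 1) * ∑ j ∈ range (J + 1), u j ^ 2

section NeumannLaplacian

variable {J : ℕ}

lemma neumannLap_sub (u v : ℕ → ℝ) (j : ℕ) :
    neumannLap J (fun k => u k - v k) j = neumannLap J u j - neumannLap J v j := by
  simp only [neumannLap]; ring

lemma sum_mul_neumannLap (u : ℕ → ℝ) :
    ∑ j ∈ range (J + 1), u j * neumannLap J u j = -∑ j ∈ range J, (u (j + 1) - u j) ^ 2 := by
  have forward : ∑ j ∈ range (J + 1), u j * (u (min (j + 1) J) - u j)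
      = ∑ j ∈ range J, u j * (u (j + 1) - u j) := by
    rw [sum_range_succ, min_eq_right (Nat.le_succ J), sub_self, mul_zero, add_zero]
    exact sum_congr rfl fun j hj => by rw [min_eq_left (mem_range.mp hj)]
  have backward : ∑ j ∈ range (J + 1), u j * (u j - u (j - 1))
      = ∑ j ∈ range J, u (j + 1) * (u (j + 1) - u j) := by
    rw [sum_range_succ', Nat.zero_sub, sub_self, mul_zero, add_zero]
    rfl
  calc ∑ j ∈ range (J + 1), u j * neumannLap J u j
      = ∑ j ∈ range (J + 1), u j * (u (min (j + 1) J) - u j)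
        - ∑ j ∈ range (J + 1), u j * (u j - u (j - 1)) := by
        rw [← sum_sub_distrib]; exact sum_congr rfl fun j _ => by simp only [neumannLap]; ring
    _ = -∑ j ∈ range J, (u (j + 1) - u j) ^ 2 := by
        rw [forward, backward, ← sum_sub_distrib, ← sum_neg_distrib]
        exact sum_congr rfl fun j _ => by ring

lemma sum_mul_neumannLap_nonpos (u : ℕ → ℝ) :
    ∑ j ∈ range (J + 1), u j * neumannLap J u j ≤ 0 := by
  rw [sum_mul_neumannLap, neg_nonpos]
  exact sum_nonneg fun j _ => sq_nonneg _

lemma neumannLap_nonpos_of_forall_le {u : ℕ → ℝ} {j₀ : ℕ} (hj₀ : j₀ ≤ J)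
    (hmax : ∀ j ≤ J, u j ≤ u j₀) :
    neumannLap J u j₀ ≤ 0 := by
  have := hmax _ (min_le_right (j₀ + 1) J)
  have := hmax (j₀ - 1) (by omega)
  simp only [neumannLap]; linarith

lemma neumannLap_nonneg_of_forall_ge {u : ℕ → ℝ} {j₀ : ℕ} (hj₀ : j₀ ≤ J)
    (hmin : ∀ j ≤ J, u j₀ ≤ u j) : 0 ≤ neumannLap J u j₀ := by
  have := neumannLap_nonpos_of_forall_le (u := fun j => -u j) hj₀ fun j hj => neg_le_neg (hmin j hj)
  simp only [neumannLap] at this ⊢; linarith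

lemma exists_max_on_Iic (u : ℕ → ℝ) : ∃ j₀ ≤ J, ∀ j ≤ J, u j ≤ u j₀ := by
  obtain ⟨j₀, hj₀, hmax⟩ := exists_max_image (range (J + 1)) u nonempty_range_add_one
  exact ⟨j₀, Nat.lt_succ_iff.mp (mem_range.mp hj₀),
    fun j hj => hmax j (mem_range.mpr (Nat.lt_succ_of_le hj))⟩

lemma exists_min_on_Iic (u : ℕ → ℝ) : ∃ j₀ ≤ J, ∀ j ≤ J, u j₀ ≤ u j := by
  obtain ⟨j₀, hj₀, hmin⟩ := exists_min_image (range (J + 1)) u nonempty_range_add_one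
  exact ⟨j₀, Nat.lt_succ_iff.mp (mem_range.mp hj₀),
    fun j hj => hmin j (mem_range.mpr (Nat.lt_succ_of_le hj))⟩

variable {lam : ℝ} {a u v : ℕ → ℝ}

lemma le_of_implicitStep (hlam : 0 ≤ lam) (ha : ∀ j ≤ J, 0 ≤ a j)
    (hstep : ∀ j ≤ J, u j - lam * neumannLap J u j + a j * u j = v j)
    {hi : ℝ} (hhi : 0 ≤ hi) (hv : ∀ j ≤ J, v j ≤ hi) {j : ℕ} (hj : j ≤ J) : u j ≤ hi := by
  obtain ⟨j₀, hj₀, hmax⟩ := exists_max_on_Iic (J := J) u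
  refine (hmax j hj).trans ?_
  have hlap := mul_nonpos_of_nonneg_of_nonpos hlam (neumannLap_nonpos_of_forall_le hj₀ hmax)
  rcases le_or_gt (u j₀) 0 with hneg | hpos
  · linarith
  · nlinarith [hstep j₀ hj₀, hv j₀ hj₀, ha j₀ hj₀]

lemma div_le_of_implicitStep (hlam : 0 ≤ lam) {abar : ℝ} (ha : ∀ j ≤ J, 0 ≤ a j ∧ a j ≤ abar)
    (hstep : ∀ j ≤ J, u j - lam * neumannLap J u j + a j * u j = v j)
    {lo : ℝ} (hlo : 0 ≤ lo) (hv : ∀ j ≤ J, lo ≤ v j) {j : ℕ} (hj : j ≤ J) :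
    lo / (1 + abar) ≤ u j := by
  obtain ⟨j₀, hj₀, hmin⟩ := exists_min_on_Iic (J := J) u
  refine le_trans ?_ (hmin j hj)
  have hlap := mul_nonneg hlam (neumannLap_nonneg_of_forall_ge hj₀ hmin)
  obtain ⟨ha₀, habar⟩ := ha j₀ hj₀
  have hlo_le : lo ≤ u j₀ * (1 + a j₀) := by linarith [hstep j₀ hj₀, hv j₀ hj₀]
  have hu₀ : 0 ≤ u j₀ := nonneg_of_mul_nonneg_left (hlo.trans hlo_le) (by linarith)
  rw [div_le_iff₀ (by linarith)]
  nlinarith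

lemma nonneg_of_implicitStep (hlam : 0 ≤ lam)
    (ha : ∀ j ≤ J, 0 ≤ a j) (hstep : ∀ j ≤ J, u j - lam * neumannLap J u j + a j * u j = v j)
    (hv : ∀ j ≤ J, 0 ≤ v j) {j : ℕ} (hj : j ≤ J) : 0 ≤ u j := by
  have hneg : ∀ j ≤ J, -u j - lam * neumannLap J (fun k => -u k) j + a j * -u j = -v j := by
    intro j hj
    simp only [neumannLap] at hstep ⊢
    linear_combination -hstep j hj
  simpa using le_of_implicitStep hlam ha hneg le_rfl (fun j hj => neg_nonpos.mpr (hv j hj)) hj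

lemma sum_sq_sub_sum_sq_le_of_implicitStep (hlam : 0 ≤ lam) {r : ℕ → ℝ}
    (hstep : ∀ j ≤ J, u j - lam * neumannLap J u j = v j + r j) :
    ∑ j ∈ range (J + 1), u j ^ 2 - ∑ j ∈ range (J + 1), v j ^ 2
      ≤ 2 * ∑ j ∈ range (J + 1), u j * r j := by
  have hpoint : ∀ j ∈ range (J + 1),
      u j ^ 2 - v j ^ 2 ≤ 2 * (u j * r j) + 2 * lam * (u j * neumannLap J u j) := by
    intro j hj
    have hv : v j = u j - (lam * neumannLap J u j + r j) := by
      linarith [hstep j (Nat.lt_succ_iff.mp (mem_range.mp hj))]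
    rw [hv]
    nlinarith [sq_nonneg (lam * neumannLap J u j + r j)]
  have hsum := sum_le_sum hpoint
  rw [sum_add_distrib, ← mul_sum, ← mul_sum, sum_sub_distrib] at hsum
  nlinarith [mul_nonneg (mul_nonneg zero_le_two hlam)
    (neg_nonneg.mpr (sum_mul_neumannLap_nonpos (J := J) u))]

end NeumannLaplacian

section GridNorm

variable {I J : ℕ}

lemma rowNormSq_nonneg (u : ℕ → ℝ) : 0 ≤ rowNormSq J u := by
  unfold rowNormSq; positivity

lemma rowNormSq_le_gnormSq (m : ℕ → ℕ → ℝ) {i : ℕ} (hi : i ≤ I) :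
    rowNormSq J (m i) ≤ gnormSq I J m :=
  le_sup' (fun i => rowNormSq J (m i)) (mem_range.mpr (Nat.lt_succ_of_le hi))

lemma gnormSq_nonneg (m : ℕ → ℕ → ℝ) : 0 ≤ gnormSq I J m :=
  (rowNormSq_nonneg _).trans (rowNormSq_le_gnormSq m (Nat.zero_le I))

lemma gnormSq_le {m : ℕ → ℕ → ℝ} {r : ℝ} (h : ∀ i ≤ I, rowNormSq J (m i) ≤ r) :
    gnormSq I J m ≤ r :=
  sup'_le _ _ fun i hi => h i (Nat.lt_succ_iff.mp (mem_range.mp hi))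

lemma rowNormSq_le_mul {u w : ℕ → ℝ} {k : ℝ} (h : ∀ j ≤ J, u j ^ 2 ≤ k * w j ^ 2) :
    rowNormSq J u ≤ k * rowNormSq J w := by
  unfold rowNormSq
  rw [mul_left_comm, mul_sum _ _ k]
  exact mul_le_mul_of_nonneg_left
    (sum_le_sum fun j hj => h j (Nat.lt_succ_iff.mp (mem_range.mp hj))) (by positivity)

lemma rowNormSq_sub_le_of_implicitStep {lam α β γ : ℝ} (hlam : 0 ≤ lam) {u v r w z : ℕ → ℝ}
    (hstep : ∀ j ≤ J, u j - lam * neumannLap J u j = v j + r j)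
    (hr : ∀ j ≤ J, 2 * (u j * r j) ≤ α * u j ^ 2 + β * w j ^ 2 + γ * z j ^ 2) :
    rowNormSq J u - rowNormSq J v
      ≤ α * rowNormSq J u + β * rowNormSq J w + γ * rowNormSq J z := by
  have henergy := sum_sq_sub_sum_sq_le_of_implicitStep hlam hstep
  have hsum : 2 * ∑ j ∈ range (J + 1), u j * r j
      ≤ α * ∑ j ∈ range (J + 1), u j ^ 2 + β * ∑ j ∈ range (J + 1), w j ^ 2
        + γ * ∑ j ∈ range (J + 1), z j ^ 2 := by
    rw [mul_sum, mul_sum, mul_sum, mul_sum, ← sum_add_distrib, ← sum_add_distrib]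
    exact sum_le_sum fun j hj => hr j (Nat.lt_succ_iff.mp (mem_range.mp hj))
  have hJ : (0 : ℝ) ≤ 1 / ((J : ℝ) + 1) := by positivity
  unfold rowNormSq
  nlinarith [mul_le_mul_of_nonneg_left (henergy.trans hsum) hJ]

end GridNorm

lemma sub_mul_sub_nonpos_of_antitone {g : ℝ → ℝ} (hg : Antitone g) (x y : ℝ) :
    (g x - g y) * (x - y) ≤ 0 := by
  rcases le_total x y with h | h
  · exact mul_nonpos_of_nonneg_of_nonpos (sub_nonneg.mpr (hg h)) (sub_nonpos.mpr h)
  · exact mul_nonpos_of_nonpos_of_nonneg (sub_nonpos.mpr (hg h)) (sub_nonneg.mpr h)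

lemma lipschitz_const_nonneg {g : ℝ → ℝ} {K : ℝ}
    (hgK : ∀ ξ₁ ξ₂, 0 ≤ ξ₁ → 0 ≤ ξ₂ → |g ξ₂ - g ξ₁| ≤ K * |ξ₂ - ξ₁|) : 0 ≤ K := by
  simpa using (abs_nonneg _).trans (hgK 0 1 le_rfl zero_le_one)

/- Writing `e = ψ₁ - ψ₂`, `δ = φ₁ - φ₂` and `G = g (φ₁ ψ₁) - g (φ₂ ψ₂)`, monotonicity gives
`G (φ₂ e + ψ₁ δ) ≤ 0`, so `φ₂ G e` is controlled by `ψ₁ |G| |δ|`, and `|G|` by Lipschitz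
continuity; dividing by `φ₂ ≥ ε` yields the bound. -/
lemma mul_sub_mul_mul_sub_le {g : ℝ → ℝ} {K ε B φ₁ φ₂ ψ₁ ψ₂ : ℝ} (hg : Antitone g)
    (hg_nonpos : ∀ ξ, g ξ ≤ 0)
    (hgK : ∀ ξ₁ ξ₂, 0 ≤ ξ₁ → 0 ≤ ξ₂ → |g ξ₂ - g ξ₁| ≤ K * |ξ₂ - ξ₁|)
    (hε : 0 < ε) (hφ₁ : 0 ≤ φ₁) (hφ₂ : ε ≤ φ₂) (hψ₁ : 0 ≤ ψ₁) (hψ₁B : ψ₁ ≤ B) (hψ₂ : 0 ≤ ψ₂) :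
    (g (φ₁ * ψ₁) * ψ₁ - g (φ₂ * ψ₂) * ψ₂) * (ψ₁ - ψ₂)
      ≤ K * B ^ 2 * (|ψ₁ - ψ₂| * |φ₁ - φ₂|) + K * B ^ 3 / ε * (φ₁ - φ₂) ^ 2 := by
  have hK : 0 ≤ K := lipschitz_const_nonneg hgK
  have hφ₂pos : 0 < φ₂ := hε.trans_le hφ₂
  set e := ψ₁ - ψ₂
  set δ := φ₁ - φ₂
  set G := g (φ₁ * ψ₁) - g (φ₂ * ψ₂)
  have hprod : φ₁ * ψ₁ - φ₂ * ψ₂ = φ₂ * e + ψ₁ * δ := by ring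
  have hmono : G * (φ₂ * e + ψ₁ * δ) ≤ 0 := hprod ▸ sub_mul_sub_nonpos_of_antitone hg _ _
  have hlip : |G| ≤ K * (φ₂ * |e| + ψ₁ * |δ|) := by
    have h := hgK _ _ (mul_nonneg (hε.le.trans hφ₂) hψ₂) (mul_nonneg hφ₁ hψ₁)
    rw [hprod] at h
    refine h.trans (mul_le_mul_of_nonneg_left ((abs_add_le _ _).trans (le_of_eq ?_)) hK)
    rw [abs_mul, abs_mul, abs_of_pos hφ₂pos, abs_of_nonneg hψ₁]
  have hcross : φ₂ * (G * ψ₁ * e) ≤ ψ₁ ^ 2 * (|G| * |δ|) := by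
    have h1 : -(G * δ) ≤ |G| * |δ| := abs_mul G δ ▸ neg_le_abs _
    nlinarith [mul_nonpos_of_nonneg_of_nonpos hψ₁ hmono,
      mul_le_mul_of_nonneg_left h1 (sq_nonneg ψ₁)]
  have hGe : G * ψ₁ * e ≤ K * ψ₁ ^ 2 * (|e| * |δ|) + K * ψ₁ ^ 3 * δ ^ 2 / φ₂ := by
    rw [← sub_nonneg]
    have h2 := mul_le_mul_of_nonneg_left (mul_le_mul_of_nonneg_right hlip (abs_nonneg δ))
      (sq_nonneg ψ₁)
    have key : 0 ≤ φ₂ * (K * ψ₁ ^ 2 * (|e| * |δ|) + K * ψ₁ ^ 3 * δ ^ 2 / φ₂ - G * ψ₁ * e) := by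
      rw [mul_sub, mul_add, mul_div_cancel₀ _ hφ₂pos.ne', ← sq_abs δ]
      nlinarith
    exact (mul_nonneg_iff_of_pos_left hφ₂pos).mp key
  have hψ₁2 : ψ₁ ^ 2 ≤ B ^ 2 := pow_le_pow_left₀ hψ₁ hψ₁B 2
  have hψ₁3 : ψ₁ ^ 3 ≤ B ^ 3 := pow_le_pow_left₀ hψ₁ hψ₁B 3
  have hfrac : K * ψ₁ ^ 3 * δ ^ 2 / φ₂ ≤ K * B ^ 3 / ε * δ ^ 2 := by
    have hB : 0 ≤ B := hψ₁.trans hψ₁B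
    rw [div_mul_eq_mul_div]
    exact div_le_div₀ (by positivity) (by gcongr) hε hφ₂
  have hsplit : (g (φ₁ * ψ₁) * ψ₁ - g (φ₂ * ψ₂) * ψ₂) * e = g (φ₂ * ψ₂) * e ^ 2 + G * ψ₁ * e := by
    ring
  rw [hsplit]
  nlinarith [mul_nonpos_of_nonpos_of_nonneg (hg_nonpos (φ₂ * ψ₂)) (sq_nonneg e),
    mul_le_mul_of_nonneg_right (mul_le_mul_of_nonneg_left hψ₁2 hK)
      (mul_nonneg (abs_nonneg e) (abs_nonneg δ))]

lemma two_mul_mul_source_le {Δt σ a b e δ η X : ℝ} (hΔt : 0 ≤ Δt) (ha : 0 ≤ a)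
    (hX : X * e ≤ a * (|e| * |δ|) + b * δ ^ 2) :
    2 * (e * (Δt * (1 / σ ^ 2 * X - η)))
      ≤ Δt * (a / σ ^ 2 + 1) * e ^ 2 + Δt * ((a + 2 * b) / σ ^ 2) * δ ^ 2 + Δt * η ^ 2 := by
  have hamgm : 2 * (|e| * |δ|) ≤ e ^ 2 + δ ^ 2 := by
    nlinarith [sq_nonneg (|e| - |δ|), sq_abs e, sq_abs δ]
  have hXe : 1 / σ ^ 2 * (2 * (X * e)) ≤ 1 / σ ^ 2 * (a * (e ^ 2 + δ ^ 2) + 2 * b * δ ^ 2) :=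
    mul_le_mul_of_nonneg_left (by nlinarith [mul_le_mul_of_nonneg_left hamgm ha]) (by positivity)
  calc 2 * (e * (Δt * (1 / σ ^ 2 * X - η)))
      = Δt * (1 / σ ^ 2 * (2 * (X * e)) - 2 * (η * e)) := by ring
    _ ≤ Δt * (1 / σ ^ 2 * (a * (e ^ 2 + δ ^ 2) + 2 * b * δ ^ 2) + (η ^ 2 + e ^ 2)) :=
        mul_le_mul_of_nonneg_left (by nlinarith [sq_nonneg (η + e)]) hΔt
    _ = _ := by ring

lemma sq_div_sub_div_le {m S ε a b : ℝ} (hε : 0 < ε) (ha : ε ≤ a) (hb : ε ≤ b) (hm : |m| ≤ S) :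
    (m / a - m / b) ^ 2 ≤ (S / ε ^ 2) ^ 2 * (a - b) ^ 2 := by
  have ha₀ : 0 < a := hε.trans_le ha
  have hb₀ : 0 < b := hε.trans_le hb
  have habs : |m / a - m / b| ≤ S / ε ^ 2 * |a - b| := by
    rw [div_sub_div _ _ ha₀.ne' hb₀.ne', abs_div, abs_of_pos (mul_pos ha₀ hb₀),
      div_le_iff₀ (by positivity),
      show m * b - a * m = m * -(a - b) by ring, abs_mul, abs_neg]
    calc |m| * |a - b| ≤ S * |a - b| := by gcongr
      _ = S / ε ^ 2 * |a - b| * ε ^ 2 := by field_simp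
      _ ≤ S / ε ^ 2 * |a - b| * (a * b) := by
          have hS : 0 ≤ S := (abs_nonneg m).trans hm
          gcongr; rw [sq]; gcongr
  calc (m / a - m / b) ^ 2 = |m / a - m / b| ^ 2 := (sq_abs _).symm
    _ ≤ (S / ε ^ 2 * |a - b|) ^ 2 := by gcongr
    _ = (S / ε ^ 2) ^ 2 * (a - b) ^ 2 := by rw [mul_pow, sq_abs]

lemma discrete_gronwall_of_lt {u : ℕ → ℝ} {c b : ℝ} {N : ℕ} (hu₀ : ∀ n, 0 ≤ u n)
    (hc : 0 ≤ c) (hb : 0 ≤ b) (hu : ∀ n < N, u (n + 1) ≤ (1 + c) * u n + b) {n : ℕ}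
    (hn : n ≤ N) : u n ≤ (u 0 + n * b) * Real.exp (n * c) := by
  have hfrozen : ∀ k ≥ 0, u (min (k + 1) N) ≤ (1 + c) * u (min k N) + b := by
    intro k _
    rcases lt_or_ge k N with hk | hk
    · rw [min_eq_left hk, min_eq_left hk.le]
      exact hu k hk
    · rw [min_eq_right hk, min_eq_right (hk.trans k.le_succ)]
      nlinarith [hu₀ N]
  have h := discrete_gronwall (u := fun k => u (min k N)) (c := fun _ => c) (b := fun _ => b)
    (hu₀ _) hfrozen (fun _ _ => hc) (fun _ _ => hb) (Nat.zero_le n)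
  simpa [min_eq_left hn, mul_comm] using h

-- `h (c + ν) < 1` gives `1 - h c ≥ ν / (c + ν)`; this is where the factor `(c + ν) / ν`
-- in the stability constant comes from.
lemma le_one_add_mul_add_of_sub_le {h c ν x y q : ℝ} (hh : 0 ≤ h) (hc : 0 ≤ c) (hν : 0 < ν)
    (hcfl : h * (c + ν) < 1) (hx : 0 ≤ x) (hq : 0 ≤ q) (hxy : y - x ≤ h * (c * y + q)) :
    y ≤ (1 + h * (c * (c + ν) / ν)) * x + h * (q * (c + ν) / ν) := by
  have hpos : ν / (c + ν) ≤ 1 - h * c := by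
    rw [div_le_iff₀ (by linarith)]; nlinarith
  have hν' : 0 < ν / (c + ν) := by positivity
  have hy : y * (1 - h * c) ≤ x + h * q := by linarith
  have hy' : y ≤ (x + h * q) / (1 - h * c) := by rw [le_div_iff₀ (hν'.trans_le hpos)]; exact hy
  have hinv : 1 / (1 - h * c) ≤ (c + ν) / ν := by
    rw [div_le_div_iff₀ (hν'.trans_le hpos) hν]; nlinarith
  calc y ≤ (x + h * q) / (1 - h * c) := hy'
    _ = x + h * c * x * (1 / (1 - h * c)) + h * q * (1 / (1 - h * c)) := by
        field_simp [(hν'.trans_le hpos).ne']; ring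
    _ ≤ x + h * c * x * ((c + ν) / ν) + h * q * ((c + ν) / ν) := by gcongr
    _ = _ := by ring

lemma grid_mem_Icc {J j : ℕ} (hj : j ≤ J) : (j : ℝ) / J ∈ Set.Icc (0 : ℝ) 1 :=
  ⟨by positivity, div_le_one_of_le₀ (by exact_mod_cast hj) (Nat.cast_nonneg J)⟩

lemma sub_mul_eq_of_div_sub_mul_div_eq {Δt h d a b L c : ℝ} (hΔt : Δt ≠ 0) (hh : h ≠ 0)
    (heq : (a - b) / Δt - d * (L / h ^ 2) = c) : a - Δt * d / h ^ 2 * L = b + Δt * c := by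
  field_simp at heq ⊢
  linear_combination heq

def diffusionNumber (T σ : ℝ) (I J : ℕ) : ℝ := T / I * (σ ^ 2 / 2) / (1 / (J : ℝ)) ^ 2

lemma diffusionNumber_nonneg {T : ℝ} (hT : 0 ≤ T) (σ : ℝ) (I J : ℕ) :
    0 ≤ diffusionNumber T σ I J := by
  unfold diffusionNumber; positivity

def fwdResidual (T σ : ℝ) (I J : ℕ) (f : ℝ → ℝ → ℝ) (φ ψ : ℕ → ℕ → ℝ) (i j : ℕ) : ℝ :=
  if i = 0 then 0
  else (ψ i j - ψ (i - 1) j) / (T / I) - σ ^ 2 / 2 * (neumannLap J (ψ i) j / (1 / (J : ℝ)) ^ 2)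
    - 1 / σ ^ 2 * f (j / J) (φ i j * ψ i j) * ψ i j

def fwdStabilityConst (T σ K ε B Sm c ν : ℝ) : ℝ :=
  Real.exp (T * (c * (c + ν) / ν))
    * ((Sm / ε ^ 2) ^ 2 + T * ((c + ν) / ν) * ((K * B ^ 2 + 2 * (K * B ^ 3 / ε)) / σ ^ 2 + 1))

lemma fwdStabilityConst_pos {T σ K ε B Sm c ν : ℝ} (hT : 0 < T) (hK : 0 ≤ K) (hε : 0 < ε)
    (hB : 0 ≤ B) (hc : 0 ≤ c) (hν : 0 < ν) : 0 < fwdStabilityConst T σ K ε B Sm c ν := by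
  unfold fwdStabilityConst; positivity

lemma mul_add_le_fwdStabilityConst_mul {T σ K ε B Sm c ν P H : ℝ} (hT : 0 ≤ T) (hK : 0 ≤ K)
    (hε : 0 < ε) (hB : 0 ≤ B) (hc : 0 ≤ c) (hν : 0 < ν) (hP : 0 ≤ P) (hH : 0 ≤ H) :
    ((Sm / ε ^ 2) ^ 2 * P + T * (((K * B ^ 2 + 2 * (K * B ^ 3 / ε)) / σ ^ 2 * P + H) * (c + ν) / ν))
        * Real.exp (T * (c * (c + ν) / ν))
      ≤ fwdStabilityConst T σ K ε B Sm c ν * P + fwdStabilityConst T σ K ε B Sm c ν * H := by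
  have hW : 0 ≤ T * ((c + ν) / ν) := by positivity
  have hD : 0 ≤ (K * B ^ 2 + 2 * (K * B ^ 3 / ε)) / σ ^ 2 := by positivity
  have hE := (Real.exp_pos (T * (c * (c + ν) / ν))).le
  rw [fwdStabilityConst]
  linear_combination mul_nonneg (mul_nonneg hE hW) hP
    + mul_nonneg (mul_nonneg hE (add_nonneg (sq_nonneg (Sm / ε ^ 2)) (mul_nonneg hW hD))) hH

section Schemes

variable {T σ : ℝ} {I J : ℕ} {f : ℝ → ℝ → ℝ}

lemma BScheme.implicitStep {uT : ℝ → ℝ} {ψ φ : ℕ → ℕ → ℝ} (h : BScheme T σ I J f uT ψ φ)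
    (hT : T ≠ 0) (hI : I ≠ 0) (hJ : J ≠ 0) {i j : ℕ} (hi : i < I) (hj : j ≤ J) :
    φ i j - diffusionNumber T σ I J * neumannLap J (φ i) j
      = φ (i + 1) j + T / I * (1 / σ ^ 2 * f (j / J) (φ i j * ψ i j) * φ i j) := by
  have heq : (φ i j - φ (i + 1) j) / (T / I) - σ ^ 2 / 2 * (neumannLap J (φ i) j / (1 / J) ^ 2)
      = 1 / σ ^ 2 * f (j / J) (φ i j * ψ i j) * φ i j := by
    have := h.1 i hi j hj
    rw [← neg_sub, neg_div] at this
    simp only [neumannLap]; linarith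
  exact sub_mul_eq_of_div_sub_mul_div_eq (by positivity) (by positivity) heq

lemma FScheme.implicitStep {m0 : ℝ → ℝ} {φ ψ : ℕ → ℕ → ℝ} (h : FScheme T σ I J f m0 φ ψ)
    (hT : T ≠ 0) (hI : I ≠ 0) (hJ : J ≠ 0) {i j : ℕ} (hi : i < I) (hj : j ≤ J) :
    ψ (i + 1) j - diffusionNumber T σ I J * neumannLap J (ψ (i + 1)) j
      = ψ i j + T / I * (1 / σ ^ 2 * f (j / J) (φ (i + 1) j * ψ (i + 1) j) * ψ (i + 1) j) :=
  sub_mul_eq_of_div_sub_mul_div_eq (by positivity) (by positivity) (h.1 i hi j hj)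

lemma implicitStep_of_fwdResidual (φ ψ : ℕ → ℕ → ℝ) (hT : T ≠ 0) (hI : I ≠ 0) (hJ : J ≠ 0)
    (i j : ℕ) :
    ψ (i + 1) j - diffusionNumber T σ I J * neumannLap J (ψ (i + 1)) j
      = ψ i j + T / I * (1 / σ ^ 2 * f (j / J) (φ (i + 1) j * ψ (i + 1) j) * ψ (i + 1) j
          + fwdResidual T σ I J f φ ψ (i + 1) j) := by
  refine sub_mul_eq_of_div_sub_mul_div_eq (by positivity) (by positivity) ?_
  simp only [fwdResidual, neumannLap, Nat.add_one_ne_zero, if_false, Nat.add_sub_cancel]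
  ring

lemma BScheme.div_pow_le {uT : ℝ → ℝ} {ψ φ : ℕ → ℕ → ℝ} (h : BScheme T σ I J f uT ψ φ)
    (hT : 0 < T) (hI : I ≠ 0) (hJ : J ≠ 0) (hfneg : ∀ x ∈ Set.Icc (0 : ℝ) 1, ∀ ξ, f x ξ ≤ 0)
    {Fm U : ℝ} (hFm : ∀ x ∈ Set.Icc (0 : ℝ) 1, ∀ ξ, |f x ξ| ≤ Fm)
    (hU : ∀ x ∈ Set.Icc (0 : ℝ) 1, |uT x| ≤ U) {i : ℕ} (hi : i ≤ I) {j : ℕ} (hj : j ≤ J) :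
    Real.exp (-U / σ ^ 2) / (1 + T / I * Fm / σ ^ 2) ^ (I - i) ≤ φ i j := by
  have hFm₀ : 0 ≤ Fm := (abs_nonneg _).trans (hFm 0 ⟨le_rfl, zero_le_one⟩ 0)
  induction hi using Nat.decreasingInduction generalizing j with
  | self =>
    rw [h.2 j hj, Nat.sub_self, pow_zero, div_one, Real.exp_le_exp]
    gcongr
    exact neg_le_of_abs_le (hU _ (grid_mem_Icc hj))
  | of_succ i hi ih =>
    rw [show I - i = I - (i + 1) + 1 by omega, pow_succ (1 + T / I * Fm / σ ^ 2), ← div_div]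
    refine div_le_of_implicitStep (diffusionNumber_nonneg hT.le σ I J) (v := φ (i + 1))
      (a := fun j => T / I / σ ^ 2 * -f (j / J) (φ i j * ψ i j)) (fun j hj => ⟨?_, ?_⟩) ?_
      (by positivity) (fun j hj => ih hj) hj
    · exact mul_nonneg (by positivity) (neg_nonneg.mpr (hfneg _ (grid_mem_Icc hj) _))
    · calc T / I / σ ^ 2 * -f (j / J) (φ i j * ψ i j) ≤ T / I / σ ^ 2 * Fm :=
            mul_le_mul_of_nonneg_left ((neg_le_abs _).trans (hFm _ (grid_mem_Icc hj) _))
              (by positivity)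
        _ = T / I * Fm / σ ^ 2 := by ring
    · intro j hj
      linear_combination h.implicitStep hT.ne' hI hJ hi hj

lemma BScheme.exp_le {uT : ℝ → ℝ} {ψ φ : ℕ → ℕ → ℝ} (h : BScheme T σ I J f uT ψ φ)
    (hT : 0 < T) (hI : I ≠ 0) (hJ : J ≠ 0) (hfneg : ∀ x ∈ Set.Icc (0 : ℝ) 1, ∀ ξ, f x ξ ≤ 0)
    {Fm U : ℝ} (hFm : ∀ x ∈ Set.Icc (0 : ℝ) 1, ∀ ξ, |f x ξ| ≤ Fm)
    (hU : ∀ x ∈ Set.Icc (0 : ℝ) 1, |uT x| ≤ U) :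
    ∀ i ≤ I, ∀ j ≤ J, Real.exp (-(U + Fm * T) / σ ^ 2) ≤ φ i j := by
  intro i hi j hj
  have hFm₀ : 0 ≤ Fm := (abs_nonneg _).trans (hFm 0 ⟨le_rfl, zero_le_one⟩ 0)
  have hgrowth : (1 + T / I * Fm / σ ^ 2) ^ (I - i) ≤ Real.exp (Fm * T / σ ^ 2) :=
    calc (1 + T / I * Fm / σ ^ 2) ^ (I - i) ≤ (1 + T / I * Fm / σ ^ 2) ^ I :=
          pow_le_pow_right₀ (le_add_of_nonneg_right (by positivity)) (Nat.sub_le I i)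
      _ ≤ Real.exp (T / I * Fm / σ ^ 2) ^ I := by
          gcongr; linarith [Real.add_one_le_exp (T / I * Fm / σ ^ 2)]
      _ = Real.exp (Fm * T / σ ^ 2) := by
          rw [← Real.exp_nat_mul]; congr 1; field_simp
  calc Real.exp (-(U + Fm * T) / σ ^ 2) = Real.exp (-U / σ ^ 2) / Real.exp (Fm * T / σ ^ 2) := by
        rw [← Real.exp_sub]; ring_nf
    _ ≤ Real.exp (-U / σ ^ 2) / (1 + T / I * Fm / σ ^ 2) ^ (I - i) :=
        div_le_div_of_nonneg_left (Real.exp_pos _).le (by positivity) hgrowth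
    _ ≤ φ i j := h.div_pow_le hT hI hJ hfneg hFm hU hi hj

lemma FScheme.nonneg_and_le {m0 : ℝ → ℝ} {φ ψ : ℕ → ℕ → ℝ} (h : FScheme T σ I J f m0 φ ψ)
    (hT : 0 < T) (hI : I ≠ 0) (hJ : J ≠ 0) (hfneg : ∀ x ∈ Set.Icc (0 : ℝ) 1, ∀ ξ, f x ξ ≤ 0)
    {ε Sm : ℝ} (hε : 0 < ε) (hφ : ∀ j ≤ J, ε ≤ φ 0 j)
    (hm0 : ∀ x ∈ Set.Icc (0 : ℝ) 1, 0 ≤ m0 x ∧ m0 x ≤ Sm) :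
    ∀ i ≤ I, ∀ j ≤ J, 0 ≤ ψ i j ∧ ψ i j ≤ Sm / ε := by
  intro i
  induction i with
  | zero =>
    intro _ j hj
    have hφ₀ := hφ j hj
    obtain ⟨hm₀, hmS⟩ := hm0 _ (grid_mem_Icc hj)
    rw [h.2 j hj]
    exact ⟨div_nonneg hm₀ (hε.le.trans hφ₀), div_le_div₀ (hm₀.trans hmS) hmS hε hφ₀⟩
  | succ i ih =>
    intro hi
    have ha : ∀ j ≤ J, 0 ≤ T / I / σ ^ 2 * -f (j / J) (φ (i + 1) j * ψ (i + 1) j) :=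
      fun j hj => mul_nonneg (by positivity) (neg_nonneg.mpr (hfneg _ (grid_mem_Icc hj) _))
    have hstep : ∀ j ≤ J, ψ (i + 1) j - diffusionNumber T σ I J * neumannLap J (ψ (i + 1)) j
        + T / I / σ ^ 2 * -f (j / J) (φ (i + 1) j * ψ (i + 1) j) * ψ (i + 1) j = ψ i j := by
      intro j hj
      linear_combination h.implicitStep hT.ne' hI hJ hi hj
    have hprev := ih (Nat.le_of_succ_le hi)
    have hB : 0 ≤ Sm / ε := (hprev 0 (Nat.zero_le J)).1.trans (hprev 0 (Nat.zero_le J)).2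
    exact fun j hj =>
      ⟨nonneg_of_implicitStep (diffusionNumber_nonneg hT.le σ I J) ha hstep
          (fun j hj => (hprev j hj).1) hj,
        le_of_implicitStep (diffusionNumber_nonneg hT.le σ I J) ha hstep hB
          (fun j hj => (hprev j hj).2) hj⟩

lemma FScheme.rowNormSq_error_zero_le {m0 : ℝ → ℝ} {φh ψh φt ψt : ℕ → ℕ → ℝ}
    (h : FScheme T σ I J f m0 φh ψh) {ε Sm : ℝ} (hε : 0 < ε)
    (hm0 : ∀ x ∈ Set.Icc (0 : ℝ) 1, |m0 x| ≤ Sm) (hφh : ∀ j ≤ J, ε ≤ φh 0 j)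
    (hφt : ∀ j ≤ J, ε ≤ φt 0 j) (hψt₀ : ∀ j ≤ J, ψt 0 j = m0 (j / J) / φt 0 j) :
    rowNormSq J (fun j => ψh 0 j - ψt 0 j)
      ≤ (Sm / ε ^ 2) ^ 2 * rowNormSq J (fun j => φh 0 j - φt 0 j) :=
  rowNormSq_le_mul fun j hj => by
    rw [h.2 j hj, hψt₀ j hj]
    exact sq_div_sub_div_le hε (hφh j hj) (hφt j hj) (hm0 _ (grid_mem_Icc hj))

lemma FScheme.rowNormSq_error_succ_sub_le {m0 : ℝ → ℝ} {φh ψh φt ψt : ℕ → ℕ → ℝ}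
    (h : FScheme T σ I J f m0 φh ψh) (hT : 0 < T) (hI : I ≠ 0) (hJ : J ≠ 0)
    (hfneg : ∀ x ∈ Set.Icc (0 : ℝ) 1, ∀ ξ, f x ξ ≤ 0)
    (hfmono : ∀ x ∈ Set.Icc (0 : ℝ) 1, Antitone (f x)) {K : ℝ}
    (hK : ∀ x ∈ Set.Icc (0 : ℝ) 1, ∀ ξ₁ ξ₂ : ℝ, 0 ≤ ξ₁ → 0 ≤ ξ₂ →
      |f x ξ₂ - f x ξ₁| ≤ K * |ξ₂ - ξ₁|)
    {ε B : ℝ} (hε : 0 < ε) (hφh : ∀ i ≤ I, ∀ j ≤ J, 0 ≤ φh i j)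
    (hψh : ∀ i ≤ I, ∀ j ≤ J, 0 ≤ ψh i j ∧ ψh i j ≤ B) (hφt : ∀ i ≤ I, ∀ j ≤ J, ε ≤ φt i j)
    (hψt : ∀ i ≤ I, ∀ j ≤ J, 0 ≤ ψt i j) {i : ℕ} (hi : i < I) :
    rowNormSq J (fun j => ψh (i + 1) j - ψt (i + 1) j) - rowNormSq J (fun j => ψh i j - ψt i j)
      ≤ T / I * ((K * B ^ 2 / σ ^ 2 + 1) * rowNormSq J (fun j => ψh (i + 1) j - ψt (i + 1) j)
        + (K * B ^ 2 + 2 * (K * B ^ 3 / ε)) / σ ^ 2 * gnormSq I J (fun i j => φh i j - φt i j)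
        + gnormSq I J (fwdResidual T σ I J f φt ψt)) := by
  have hK₀ := lipschitz_const_nonneg (hK 0 ⟨le_rfl, zero_le_one⟩)
  have hB : 0 ≤ B := (hψh 0 (Nat.zero_le I) 0 (Nat.zero_le J)).1.trans
    (hψh 0 (Nat.zero_le I) 0 (Nat.zero_le J)).2
  have hΔt : 0 < T / I := by positivity
  set η := fwdResidual T σ I J f φt ψt
  have hstep : ∀ j ≤ J, (ψh (i + 1) j - ψt (i + 1) j)
      - diffusionNumber T σ I J * neumannLap J (fun j => ψh (i + 1) j - ψt (i + 1) j) j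
      = (ψh i j - ψt i j) + T / I * (1 / σ ^ 2
          * (f (j / J) (φh (i + 1) j * ψh (i + 1) j) * ψh (i + 1) j
            - f (j / J) (φt (i + 1) j * ψt (i + 1) j) * ψt (i + 1) j) - η (i + 1) j) := by
    intro j hj
    rw [neumannLap_sub]
    linear_combination h.implicitStep hT.ne' hI hJ hi hj
      - implicitStep_of_fwdResidual (f := f) φt ψt hT.ne' hI hJ i j
  have hrow := rowNormSq_sub_le_of_implicitStep (diffusionNumber_nonneg hT.le σ I J) hstep
    (w := fun j => φh (i + 1) j - φt (i + 1) j) (z := η (i + 1)) fun j hj =>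
      two_mul_mul_source_le hΔt.le (mul_nonneg hK₀ (sq_nonneg B)) <|
        mul_sub_mul_mul_sub_le (hfmono _ (grid_mem_Icc hj)) (hfneg _ (grid_mem_Icc hj))
          (hK _ (grid_mem_Icc hj)) hε (hφh (i + 1) hi j hj) (hφt (i + 1) hi j hj)
          (hψh (i + 1) hi j hj).1 (hψh (i + 1) hi j hj).2 (hψt (i + 1) hi j hj)
  have hD : 0 ≤ (K * B ^ 2 + 2 * (K * B ^ 3 / ε)) / σ ^ 2 := by positivity
  have hP := rowNormSq_le_gnormSq (fun i j => φh i j - φt i j) hi (J := J)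
  have hH := rowNormSq_le_gnormSq η hi (J := J)
  nlinarith [mul_le_mul_of_nonneg_left hP (mul_nonneg hΔt.le hD),
    mul_le_mul_of_nonneg_left hH hΔt.le]

lemma FScheme.gnormSq_error_le {m0 : ℝ → ℝ} {φh ψh φt ψt : ℕ → ℕ → ℝ}
    (h : FScheme T σ I J f m0 φh ψh) (hT : 0 < T) (hI : I ≠ 0) (hJ : J ≠ 0)
    (hfneg : ∀ x ∈ Set.Icc (0 : ℝ) 1, ∀ ξ, f x ξ ≤ 0)
    (hfmono : ∀ x ∈ Set.Icc (0 : ℝ) 1, Antitone (f x)) {K : ℝ}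
    (hK : ∀ x ∈ Set.Icc (0 : ℝ) 1, ∀ ξ₁ ξ₂ : ℝ, 0 ≤ ξ₁ → 0 ≤ ξ₂ →
      |f x ξ₂ - f x ξ₁| ≤ K * |ξ₂ - ξ₁|)
    {ε B Sm : ℝ} (hε : 0 < ε) (hm0 : ∀ x ∈ Set.Icc (0 : ℝ) 1, |m0 x| ≤ Sm)
    (hφh : ∀ i ≤ I, ∀ j ≤ J, ε ≤ φh i j) (hψh : ∀ i ≤ I, ∀ j ≤ J, 0 ≤ ψh i j ∧ ψh i j ≤ B)
    (hφt : ∀ i ≤ I, ∀ j ≤ J, ε ≤ φt i j) (hψt : ∀ i ≤ I, ∀ j ≤ J, 0 ≤ ψt i j)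
    (hψt₀ : ∀ j ≤ J, ψt 0 j = m0 (j / J) / φt 0 j) {c ν : ℝ}
    (hc : K * B ^ 2 / σ ^ 2 + 1 ≤ c) (hν : 0 < ν) (hcfl : T / I * (c + ν) < 1) :
    gnormSq I J (fun i j => ψh i j - ψt i j)
      ≤ fwdStabilityConst T σ K ε B Sm c ν * gnormSq I J (fun i j => φh i j - φt i j)
        + fwdStabilityConst T σ K ε B Sm c ν * gnormSq I J (fwdResidual T σ I J f φt ψt) := by
  set R : ℕ → ℝ := fun i => rowNormSq J (fun j => ψh i j - ψt i j)
  set P := gnormSq I J (fun i j => φh i j - φt i j)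
  set q := (K * B ^ 2 + 2 * (K * B ^ 3 / ε)) / σ ^ 2 * P
    + gnormSq I J (fwdResidual T σ I J f φt ψt)
  have hΔt : 0 < T / I := by positivity
  have hK₀ := lipschitz_const_nonneg (hK 0 ⟨le_rfl, zero_le_one⟩)
  have hB : 0 ≤ B := (hψh 0 (Nat.zero_le I) 0 (Nat.zero_le J)).1.trans
    (hψh 0 (Nat.zero_le I) 0 (Nat.zero_le J)).2
  have hc₀ : 0 ≤ c := le_trans (by positivity) hc
  have hP : 0 ≤ P := gnormSq_nonneg _
  have hH := gnormSq_nonneg (I := I) (J := J) (fwdResidual T σ I J f φt ψt)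
  have hq : 0 ≤ q := by positivity
  have hR₀ : R 0 ≤ (Sm / ε ^ 2) ^ 2 * P :=
    (h.rowNormSq_error_zero_le hε hm0 (hφh 0 (Nat.zero_le I)) (hφt 0 (Nat.zero_le I)) hψt₀).trans
      (mul_le_mul_of_nonneg_left (rowNormSq_le_gnormSq (fun i j => φh i j - φt i j) (Nat.zero_le I))
        (sq_nonneg _))
  have hrec : ∀ i < I,
      R (i + 1) ≤ (1 + T / I * (c * (c + ν) / ν)) * R i + T / I * (q * (c + ν) / ν) := by
    intro i hi
    refine le_one_add_mul_add_of_sub_le hΔt.le hc₀ hν hcfl (rowNormSq_nonneg _) hq ?_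
    have := h.rowNormSq_error_succ_sub_le hT hI hJ hfneg hfmono hK hε
      (fun i hi j hj => hε.le.trans (hφh i hi j hj)) hψh hφt hψt hi
    have hR := rowNormSq_nonneg (J := J) (fun j => ψh (i + 1) j - ψt (i + 1) j)
    nlinarith [mul_le_mul_of_nonneg_left (mul_le_mul_of_nonneg_right hc hR) hΔt.le]
  refine gnormSq_le fun i hi => ?_
  have hiT : i * (T / I) ≤ T :=
    calc i * (T / I) ≤ I * (T / I) := by gcongr
      _ = T := by field_simp
  calc R i
      ≤ (R 0 + i * (T / I * (q * (c + ν) / ν))) * Real.exp (i * (T / I * (c * (c + ν) / ν))) :=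
        discrete_gronwall_of_lt (u := R) (fun _ => rowNormSq_nonneg _) (by positivity)
          (by positivity) hrec hi
    _ ≤ ((Sm / ε ^ 2) ^ 2 * P + T * (q * (c + ν) / ν)) * Real.exp (T * (c * (c + ν) / ν)) := by
        rw [← mul_assoc, ← mul_assoc (i : ℝ)]
        gcongr
    _ ≤ _ := mul_add_le_fwdStabilityConst_mul hT.le hK₀ hε hB hc₀ hν hP hH

end Schemes

lemma le_supIcc {g : ℝ → ℝ} (hb : ∃ B : ℝ, ∀ x ∈ Set.Icc (0 : ℝ) 1, |g x| ≤ B)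
    {x : ℝ} (hx : x ∈ Set.Icc (0 : ℝ) 1) : |g x| ≤ supIcc g := by
  obtain ⟨B, hB⟩ := hb
  exact le_ciSup (f := fun y : Set.Icc (0 : ℝ) 1 => |g y|) ⟨B, by rintro r ⟨y, rfl⟩; exact hB y y.2⟩
    ⟨x, hx⟩

lemma le_supF {f : ℝ → ℝ → ℝ} (hb : ∃ B : ℝ, ∀ x ∈ Set.Icc (0 : ℝ) 1, ∀ ξ : ℝ, |f x ξ| ≤ B)
    {x : ℝ} (hx : x ∈ Set.Icc (0 : ℝ) 1) (ξ : ℝ) : |f x ξ| ≤ supF f := by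
  obtain ⟨B, hB⟩ := hb
  exact le_ciSup (f := fun p : Set.Icc (0 : ℝ) 1 × ℝ => |f p.1 p.2|)
    ⟨B, by rintro r ⟨p, rfl⟩; exact hB p.1 p.1.2 p.2⟩ (⟨⟨x, hx⟩, ξ⟩ : Set.Icc (0 : ℝ) 1 × ℝ)

theorem stmt_10_general (T σ : ℝ) (hT : 0 < T)
    (f : ℝ → ℝ → ℝ) (uT m0 : ℝ → ℝ)
    (hfb : ∃ B : ℝ, ∀ x ∈ Set.Icc (0:ℝ) 1, ∀ ξ : ℝ, |f x ξ| ≤ B)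
    (hfneg : ∀ x ∈ Set.Icc (0:ℝ) 1, ∀ ξ : ℝ, f x ξ ≤ 0)
    (hfmono : ∀ x ∈ Set.Icc (0:ℝ) 1, Antitone (f x))
    (huTb : ∃ B : ℝ, ∀ x ∈ Set.Icc (0:ℝ) 1, |uT x| ≤ B)
    (hm0b : ∃ B : ℝ, ∀ x ∈ Set.Icc (0:ℝ) 1, |m0 x| ≤ B)
    (hm0 : ∀ x ∈ Set.Icc (0:ℝ) 1, 0 ≤ m0 x)
    (K : ℝ)
    (hK : ∀ x ∈ Set.Icc (0:ℝ) 1, ∀ ξ₁ ξ₂ : ℝ, 0 ≤ ξ₁ → 0 ≤ ξ₂ →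
      |f x ξ₂ - f x ξ₁| ≤ K * |ξ₂ - ξ₁|)
    (ν : ℝ) (hν : 0 < ν) :
    ∃ C > 0, ∀ I J : ℕ, 1 ≤ I → 1 ≤ J →
      (I:ℝ)/T > 1 + K/σ^2 *
        max ((supIcc fun x => Real.exp (uT x / σ^2))^2)
            ((supIcc m0)^2 / (Real.exp (-(supIcc uT + supF f * T) / σ^2))^2) + ν →
      ∀ Φs Ψs : ℕ → ℕ → ℕ → ℝ,
        (∀ i ≤ I, ∀ j ≤ J, Ψs 0 i j = 0) →
        (∀ m : ℕ, BScheme T σ I J f uT (Ψs m) (Φs m)) →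
        (∀ m : ℕ, FScheme T σ I J f m0 (Φs m) (Ψs (m+1))) →
      ∀ n : ℕ, ∀ φt ψt : ℕ → ℕ → ℝ,
        MemM I J (Real.exp (-(supIcc uT + supF f * T) / σ^2)) φt →
        MemM I J 0 ψt →
        (∀ j ≤ J, ψt 0 j = m0 ((j:ℝ)/(J:ℝ)) / φt 0 j) →
        gnormSq I J (fun i j => Ψs (n+1) i j - ψt i j)
          ≤ C * gnormSq I J (fun i j => Φs n i j - φt i j)
            + C * gnormSq I J (fun i j =>
                if i = 0 then 0
                else
                  (ψt i j - ψt (i-1) j) / (T/(I:ℝ))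
                    - σ^2/2 * ((ψt i (min (j+1) J) - 2*ψt i j + ψt i (j-1)) / (1/(J:ℝ))^2)
                    - (1/σ^2) * f ((j:ℝ)/(J:ℝ)) (φt i j * ψt i j) * ψt i j) := by
  have hK₀ := lipschitz_const_nonneg (hK 0 ⟨le_rfl, zero_le_one⟩)
  set ε := Real.exp (-(supIcc uT + supF f * T) / σ ^ 2)
  set Sm := supIcc m0
  set c := 1 + K / σ ^ 2 * max ((supIcc fun x => Real.exp (uT x / σ ^ 2)) ^ 2) (Sm ^ 2 / ε ^ 2)
  have hε : 0 < ε := Real.exp_pos _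
  have hm0le (x : ℝ) (hx : x ∈ Set.Icc (0 : ℝ) 1) : |m0 x| ≤ Sm := le_supIcc hm0b hx
  have hB : 0 ≤ Sm / ε := div_nonneg ((abs_nonneg _).trans (hm0le 0 ⟨le_rfl, zero_le_one⟩)) hε.le
  have hc : K * (Sm / ε) ^ 2 / σ ^ 2 + 1 ≤ c := by
    rw [div_pow, mul_div_right_comm, add_comm]
    exact add_le_add_right (mul_le_mul_of_nonneg_left (le_max_right _ _) (by positivity)) 1
  have hc₀ : 0 ≤ c := le_trans (by positivity) hc
  refine ⟨fwdStabilityConst T σ K ε (Sm / ε) Sm c ν,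
    fwdStabilityConst_pos hT hK₀ hε hB hc₀ hν, ?_⟩
  intro I J hI hJ hcfl Φs Ψs _ hBs hFs n φt ψt hφt hψt hψt₀
  have hI₀ : I ≠ 0 := by omega
  have hJ₀ : J ≠ 0 := by omega
  have hφ := (hBs n).exp_le hT hI₀ hJ₀ hfneg (fun x hx => le_supF hfb hx)
    (fun x hx => le_supIcc huTb hx)
  have hψ := (hFs n).nonneg_and_le hT hI₀ hJ₀ hfneg hε (hφ 0 (Nat.zero_le I))
    (fun x hx => ⟨hm0 x hx, le_of_abs_le (hm0le x hx)⟩)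
  have hcfl' : T / I * (c + ν) < 1 := by
    rw [gt_iff_lt, lt_div_iff₀ hT] at hcfl
    rw [div_mul_eq_mul_div, div_lt_one (by positivity)]
    linarith
  exact (hFs n).gnormSq_error_le hT hI₀ hJ₀ hfneg hfmono hK hε hm0le hφ hψ hφt hψt hψt₀ hc hν hcfl'

theorem stmt_10 (T σ : ℝ) (hT : 0 < T) (hσ : 0 < σ)
    (f : ℝ → ℝ → ℝ) (uT m0 : ℝ → ℝ)
    (hfc : ∀ x ∈ Set.Icc (0:ℝ) 1, Continuous (f x))
    (hfb : ∃ B : ℝ, ∀ x ∈ Set.Icc (0:ℝ) 1, ∀ ξ : ℝ, |f x ξ| ≤ B)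
    (hfneg : ∀ x ∈ Set.Icc (0:ℝ) 1, ∀ ξ : ℝ, f x ξ ≤ 0)
    (hfmono : ∀ x ∈ Set.Icc (0:ℝ) 1, Antitone (f x))
    (huTb : ∃ B : ℝ, ∀ x ∈ Set.Icc (0:ℝ) 1, |uT x| ≤ B)
    (hm0b : ∃ B : ℝ, ∀ x ∈ Set.Icc (0:ℝ) 1, |m0 x| ≤ B)
    (hm0 : ∀ x ∈ Set.Icc (0:ℝ) 1, 0 ≤ m0 x)
    (K : ℝ)
    (hK : ∀ x ∈ Set.Icc (0:ℝ) 1, ∀ ξ₁ ξ₂ : ℝ, 0 ≤ ξ₁ → 0 ≤ ξ₂ →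
      |f x ξ₂ - f x ξ₁| ≤ K * |ξ₂ - ξ₁|)
    (ν : ℝ) (hν : 0 < ν) :
    ∃ C > 0, ∀ I J : ℕ, 1 ≤ I → 1 ≤ J →
      (I:ℝ)/T > 1 + K/σ^2 *
        max ((supIcc fun x => Real.exp (uT x / σ^2))^2)
            ((supIcc m0)^2 / (Real.exp (-(supIcc uT + supF f * T) / σ^2))^2) + ν →
      ∀ Φs Ψs : ℕ → ℕ → ℕ → ℝ,
        (∀ i ≤ I, ∀ j ≤ J, Ψs 0 i j = 0) →
        (∀ m : ℕ, BScheme T σ I J f uT (Ψs m) (Φs m)) →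
        (∀ m : ℕ, FScheme T σ I J f m0 (Φs m) (Ψs (m+1))) →
      ∀ n : ℕ, ∀ φt ψt : ℕ → ℕ → ℝ,
        MemM I J (Real.exp (-(supIcc uT + supF f * T) / σ^2)) φt →
        MemM I J 0 ψt →
        (∀ j ≤ J, ψt 0 j = m0 ((j:ℝ)/(J:ℝ)) / φt 0 j) →
        gnormSq I J (fun i j => Ψs (n+1) i j - ψt i j)
          ≤ C * gnormSq I J (fun i j => Φs n i j - φt i j)
            + C * gnormSq I J (fun i j =>
                if i = 0 then 0
                else
                  (ψt i j - ψt (i-1) j) / (T/(I:ℝ))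
                    - σ^2/2 * ((ψt i (min (j+1) J) - 2*ψt i j + ψt i (j-1)) / (1/(J:ℝ))^2)
                    - (1/σ^2) * f ((j:ℝ)/(J:ℝ)) (φt i j * ψt i j) * ψt i j) :=
  stmt_10_general T σ hT f uT m0 hfb hfneg hfmono huTb hm0b hm0 K hK ν hν
end
end

section
/- Discrete mass evolution identity: let n ∈ ℕ and set m̂^{n+1}_{i,j} := φ̂^{n+1/2}_{i,j} ψ̂^{n+1}_{i,j}, where φ̂^{n+1/2}, ψ̂ⁿ, ψ̂^{n+1} are the discrete scheme iterates. Then for every 0 ≤ i ≤ I−1: (1/(J+1)) Σ_{j=0}^{J} m̂^{n+1}_{i+1,j} − (1/(J+1)) Σ_{j=0}^{J} m̂^{n+1}_{i,j} = (Δt/σ²)·(1/(J+1)) Σ_{j=0}^{J} ψ̂^{n+1}_{i+1,j} φ̂^{n+1/2}_{i,j} ( f(x_j, ψ̂^{n+1}_{i+1,j} φ̂^{n+1/2}_{i+1,j}) − f(x_j, ψ̂ⁿ_{i,j} φ̂^{n+1/2}_{i,j}) ). -/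
noncomputable section

open Real Filter

/-! The identity is the discrete analogue of `d/dt ∫ φψ = ∫ (ψ ∂ₜφ + φ ∂ₜψ)`: writing
`φ̂_{i+1}ψ̂_{i+1} - φ̂_iψ̂_i = ψ̂_{i+1}(φ̂_{i+1} - φ̂_i) + φ̂_i(ψ̂_{i+1} - ψ̂_i)`, the scheme for `φ̂`
(explicit at time `i`) and the one for `ψ̂` (implicit at time `i+1`) bring in the Laplacians of
exactly these two factors, and they cancel after summation over `j` because the discrete Neumann
Laplacian is symmetric. Only the reaction terms survive. -/

open Finset

section NeumannLaplacian

variable {R : Type*} [CommRing R]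

def neumannLaplacian (J : ℕ) (b : ℕ → R) (j : ℕ) : R :=
  b (min (j + 1) J) - 2 * b j + b (j - 1)

theorem sum_mul_neumannLaplacian (J : ℕ) (a b : ℕ → R) :
    ∑ j ∈ range (J + 1), a j * neumannLaplacian J b j
      = ∑ j ∈ range J, (a j * b (j + 1) + a (j + 1) * b j) + a J * b J + a 0 * b 0
          - 2 * ∑ j ∈ range (J + 1), a j * b j := by
  have forward : ∑ j ∈ range (J + 1), a j * b (min (j + 1) J)
      = ∑ j ∈ range J, a j * b (j + 1) + a J * b J := by
    rw [sum_range_succ, min_eq_right J.le_succ]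
    congr 1
    exact sum_congr rfl fun j hj => by rw [min_eq_left (mem_range.mp hj)]
  have backward : ∑ j ∈ range (J + 1), a j * b (j - 1)
      = ∑ j ∈ range J, a (j + 1) * b j + a 0 * b 0 := by
    simp [sum_range_succ']
  simp only [neumannLaplacian, mul_add, mul_sub, sum_add_distrib, sum_sub_distrib, forward,
    backward, mul_left_comm _ (2 : R), ← mul_sum]
  ring

theorem sum_mul_neumannLaplacian_comm (J : ℕ) (a b : ℕ → R) :
    ∑ j ∈ range (J + 1), a j * neumannLaplacian J b j
      = ∑ j ∈ range (J + 1), b j * neumannLaplacian J a j := by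
  simp only [sum_mul_neumannLaplacian, mul_comm (a _) (b _), add_comm (b _ * a (_ + 1))]

theorem sum_mul_sub_mul_eq_of_steps (J : ℕ) (c : R) (a a' b b' p q : ℕ → R)
    (ha : ∀ j ≤ J, a' j - a j = p j - c * neumannLaplacian J a j)
    (hb : ∀ j ≤ J, b' j - b j = q j + c * neumannLaplacian J b' j) :
    ∑ j ∈ range (J + 1), (a' j * b' j - a j * b j)
      = ∑ j ∈ range (J + 1), (b' j * p j + a j * q j) := by
  have hpointwise : ∀ j ∈ range (J + 1), a' j * b' j - a j * b j
      = b' j * p j + a j * q j + c * (a j * neumannLaplacian J b' j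
          - b' j * neumannLaplacian J a j) := by
    intro j hj
    have hj : j ≤ J := Nat.lt_succ_iff.mp (mem_range.mp hj)
    linear_combination b' j * ha j hj + a j * hb j hj
  rw [sum_congr rfl hpointwise, sum_add_distrib, ← mul_sum, sum_sub_distrib,
    sum_mul_neumannLaplacian_comm, sub_self, mul_zero, add_zero]

end NeumannLaplacian

section Schemes

variable {T σ : ℝ} {I J : ℕ} {f : ℝ → ℝ → ℝ}

theorem BScheme.time_step {uT : ℝ → ℝ} {ψ φ : ℕ → ℕ → ℝ} (hB : BScheme T σ I J f uT ψ φ)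
    (hΔt : T / I ≠ 0) {i j : ℕ} (hi : i < I) (hj : j ≤ J) :
    φ (i + 1) j - φ i j
      = T / I * (-(1 / σ ^ 2) * f (j / J) (φ i j * ψ i j) * φ i j)
          - T / I * (σ ^ 2 / 2) / (1 / J) ^ 2 * neumannLaplacian J (φ i) j := by
  have h := hB.1 i hi j hj
  rw [← eq_sub_iff_add_eq, div_eq_iff hΔt] at h
  rw [h, neumannLaplacian]
  ring

theorem FScheme.time_step {m0 : ℝ → ℝ} {φ ψ : ℕ → ℕ → ℝ} (hF : FScheme T σ I J f m0 φ ψ)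
    (hΔt : T / I ≠ 0) {i j : ℕ} (hi : i < I) (hj : j ≤ J) :
    ψ (i + 1) j - ψ i j
      = T / I * (1 / σ ^ 2 * f (j / J) (φ (i + 1) j * ψ (i + 1) j) * ψ (i + 1) j)
          + T / I * (σ ^ 2 / 2) / (1 / J) ^ 2 * neumannLaplacian J (ψ (i + 1)) j := by
  have h := hF.1 i hi j hj
  rw [sub_eq_iff_eq_add, div_eq_iff hΔt] at h
  rw [h, neumannLaplacian]
  ring

end Schemes

theorem stmt_13_general (T σ : ℝ) (hT : 0 < T)
    (I J : ℕ) (hI : 1 ≤ I)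
    (f : ℝ → ℝ → ℝ) (uT m0 : ℝ → ℝ)
    (Φn Ψn Ψn1 : ℕ → ℕ → ℝ)
    (hB : BScheme T σ I J f uT Ψn Φn)
    (hF : FScheme T σ I J f m0 Φn Ψn1) :
    ∀ i < I,
      (1/((J:ℝ)+1)) * ∑ j ∈ Finset.range (J+1), Φn (i+1) j * Ψn1 (i+1) j
        - (1/((J:ℝ)+1)) * ∑ j ∈ Finset.range (J+1), Φn i j * Ψn1 i j
      = (T/(I:ℝ))/σ^2 * ((1/((J:ℝ)+1)) * ∑ j ∈ Finset.range (J+1),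
          Ψn1 (i+1) j * Φn i j *
            (f ((j:ℝ)/(J:ℝ)) (Ψn1 (i+1) j * Φn (i+1) j)
              - f ((j:ℝ)/(J:ℝ)) (Ψn i j * Φn i j))) := by
  intro i hi
  have hΔt : T / I ≠ 0 := (div_pos hT (by exact_mod_cast hI)).ne'
  have hmass := sum_mul_sub_mul_eq_of_steps J _ (Φn i) (Φn (i + 1)) (Ψn1 i) (Ψn1 (i + 1)) _ _
    (fun j hj => hB.time_step hΔt hi hj) (fun j hj => hF.time_step hΔt hi hj)
  rw [← mul_sub, ← sum_sub_distrib, hmass, mul_sum, mul_sum, mul_sum]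
  refine sum_congr rfl fun j _ => ?_
  rw [mul_comm (Ψn1 (i + 1) j) (Φn (i + 1) j), mul_comm (Ψn i j) (Φn i j)]
  ring

theorem stmt_13 (T σ : ℝ) (hT : 0 < T) (hσ : 0 < σ)
    (I J : ℕ) (hI : 1 ≤ I) (hJ : 1 ≤ J)
    (f : ℝ → ℝ → ℝ) (uT m0 : ℝ → ℝ)
    (hfc : ∀ x ∈ Set.Icc (0:ℝ) 1, Continuous (f x))
    (hfb : ∃ B : ℝ, ∀ x ∈ Set.Icc (0:ℝ) 1, ∀ ξ : ℝ, |f x ξ| ≤ B)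
    (hfneg : ∀ x ∈ Set.Icc (0:ℝ) 1, ∀ ξ : ℝ, f x ξ ≤ 0)
    (hfmono : ∀ x ∈ Set.Icc (0:ℝ) 1, Antitone (f x))
    (huTb : ∃ B : ℝ, ∀ x ∈ Set.Icc (0:ℝ) 1, |uT x| ≤ B)
    (hm0b : ∃ B : ℝ, ∀ x ∈ Set.Icc (0:ℝ) 1, |m0 x| ≤ B)
    (hm0 : ∀ x ∈ Set.Icc (0:ℝ) 1, 0 ≤ m0 x)
    (Φn Ψn Ψn1 : ℕ → ℕ → ℝ)
    (hB : BScheme T σ I J f uT Ψn Φn)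
    (hF : FScheme T σ I J f m0 Φn Ψn1) :
    ∀ i < I,
      (1/((J:ℝ)+1)) * ∑ j ∈ Finset.range (J+1), Φn (i+1) j * Ψn1 (i+1) j
        - (1/((J:ℝ)+1)) * ∑ j ∈ Finset.range (J+1), Φn i j * Ψn1 i j
      = (T/(I:ℝ))/σ^2 * ((1/((J:ℝ)+1)) * ∑ j ∈ Finset.range (J+1),
          Ψn1 (i+1) j * Φn i j *
            (f ((j:ℝ)/(J:ℝ)) (Ψn1 (i+1) j * Φn (i+1) j)
              - f ((j:ℝ)/(J:ℝ)) (Ψn i j * Φn i j))) :=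
  stmt_13_general T σ hT I J hI f uT m0 Φn Ψn Ψn1 hB hF
end
end
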